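/- arXiv:2303.01415 — 5 statements merged into one kernel-verified Lean document; each statement's English description precedes it below -/
import Mathlib

section
/- Let 𝒰 be a finite ep-metric space, let Z₁, Z₂ ⊆ 𝒰 be subsets (each with the induced ep-metric), and let x ∈ Z₁ ∩ Z₂. Let k be a positive integer with k ≤ |Z₁| and k ≤ |Z₂|. Let N_i be the k-complete neighbourhood of x in Z_i (i = 1, 2), and let N be the k-complete neighbourhood of x in Z = Z₁ ∪ Z₂. Then N ⊆ N₁ ∪ N₂. -/
open scoped ENNReal

/-- `N` is a complete neighbourhood of `x` in the subset `A` of the ambient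
ep-metric space (with the induced ep-metric): `N ⊆ A` contains `x`, all
distances from `x` within `N` are finite, and `N` is the closed ball in `A`
about `x` of radius `s(N) = max_{y ∈ N} d(x,y)`. -/
def IsCompleteNbhd {U : Type*} [PseudoEMetricSpace U] (A : Set U) (x : U)
    (N : Set U) : Prop :=
  N ⊆ A ∧ x ∈ N ∧ (∀ y ∈ N, edist x y < ⊤) ∧
    N = {y ∈ A | edist x y ≤ ⨆ z ∈ N, edist x z}

/-- `N` is the `k`-complete neighbourhood of `x` in `A`: the smallest complete
neighbourhood of `x` in `A` with at least `k` elements. -/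
def IsKComplete {U : Type*} [PseudoEMetricSpace U] (A : Set U) (x : U)
    (k : ℕ) (N : Set U) : Prop :=
  IsCompleteNbhd A x N ∧ k ≤ N.ncard ∧
    ∀ M : Set U, IsCompleteNbhd A x M → k ≤ M.ncard → N ⊆ M

/-
The closed ball in `Z = Z₁ ∪ Z₂` of radius `s(Nᵢ)` is a complete neighbourhood containing `Nᵢ`,
hence has at least `k` points, so by minimality it contains `N`. A point of `N` lying in `Zᵢ` is
therefore within `s(Nᵢ)` of `x`, i.e. lies in the ball `Nᵢ` of that radius in `Zᵢ`.
-/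

section CompleteNbhd

variable {U : Type*} [PseudoEMetricSpace U] {A B M N : Set U} {x : U} {k : ℕ}

lemma isCompleteNbhd_sep_edist_le (hx : x ∈ A) {r : ℝ≥0∞} (hr : r < ⊤) :
    IsCompleteNbhd A x {y ∈ A | edist x y ≤ r} := by
  refine ⟨fun y hy => hy.1, ⟨hx, by simp⟩, fun y hy => hy.2.trans_lt hr, ?_⟩
  have hsup : (⨆ z ∈ {y ∈ A | edist x y ≤ r}, edist x z) ≤ r := iSup₂_le fun z hz => hz.2
  ext y
  exact ⟨fun hy => ⟨hy.1, le_iSup₂ (f := fun z _ => edist x z) y hy⟩,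
    fun hy => ⟨hy.1, hy.2.trans hsup⟩⟩

lemma IsCompleteNbhd.iSup_edist_lt_top [Finite U] (hM : IsCompleteNbhd A x M) :
    ⨆ z ∈ M, edist x z < ⊤ :=
  (M.toFinite.ciSup_lt_iff ⟨x, hM.2.1, by simp⟩).2 hM.2.2.1

lemma IsCompleteNbhd.mem_iff (hM : IsCompleteNbhd A x M) {y : U} :
    y ∈ M ↔ y ∈ A ∧ edist x y ≤ ⨆ z ∈ M, edist x z :=
  Set.ext_iff.1 hM.2.2.2 y

lemma IsKComplete.subset_sep_edist_le [Finite U] (hN : IsKComplete A x k N)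
    (hM : IsCompleteNbhd B x M) (hkM : k ≤ M.ncard) (hBA : B ⊆ A) :
    N ⊆ {y ∈ A | edist x y ≤ ⨆ z ∈ M, edist x z} := by
  have hMball : M ⊆ {y ∈ A | edist x y ≤ ⨆ z ∈ M, edist x z} := fun y hy =>
    ⟨hBA (hM.1 hy), le_iSup₂ (f := fun z _ => edist x z) y hy⟩
  exact hN.2.2 _ (isCompleteNbhd_sep_edist_le (hBA (hM.1 hM.2.1)) hM.iSup_edist_lt_top)
    (hkM.trans (Set.ncard_le_ncard hMball))

lemma IsKComplete.inter_subset [Finite U] (hN : IsKComplete A x k N)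
    (hM : IsCompleteNbhd B x M) (hkM : k ≤ M.ncard) (hBA : B ⊆ A) :
    N ∩ B ⊆ M := fun _ ⟨hyN, hyB⟩ =>
  hM.mem_iff.2 ⟨hyB, (hN.subset_sep_edist_le hM hkM hBA hyN).2⟩

end CompleteNbhd

theorem kComplete_union_subset_general {U : Type*} [Fintype U] [PseudoEMetricSpace U]
    (Z₁ Z₂ : Set U) (x : U)
    (k : ℕ)
    (N₁ N₂ N : Set U)
    (hN₁ : IsKComplete Z₁ x k N₁) (hN₂ : IsKComplete Z₂ x k N₂)
    (hN : IsKComplete (Z₁ ∪ Z₂) x k N) :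
    N ⊆ N₁ ∪ N₂ := by
  intro y hy
  rcases (hN.1.1 hy : y ∈ Z₁ ∪ Z₂) with hy₁ | hy₂
  · exact Or.inl (hN.inter_subset hN₁.1 hN₁.2.1 Set.subset_union_left ⟨hy, hy₁⟩)
  · exact Or.inr (hN.inter_subset hN₂.1 hN₂.2.1 Set.subset_union_right ⟨hy, hy₂⟩)

/-- If `x ∈ Z₁ ∩ Z₂`, `Nᵢ` is the `k`-complete neighbourhood of `x` in `Zᵢ`,
and `N` is the `k`-complete neighbourhood of `x` in `Z₁ ∪ Z₂`, then
`N ⊆ N₁ ∪ N₂`. -/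
theorem kComplete_union_subset {U : Type*} [Fintype U] [PseudoEMetricSpace U]
    (Z₁ Z₂ : Set U) (x : U) (hx₁ : x ∈ Z₁) (hx₂ : x ∈ Z₂)
    (k : ℕ) (hk : 0 < k) (hk₁ : k ≤ Z₁.ncard) (hk₂ : k ≤ Z₂.ncard)
    (N₁ N₂ N : Set U)
    (hN₁ : IsKComplete Z₁ x k N₁) (hN₂ : IsKComplete Z₂ x k N₂)
    (hN : IsKComplete (Z₁ ∪ Z₂) x k N) :
    N ⊆ N₁ ∪ N₂ :=
  kComplete_union_subset_general Z₁ Z₂ x k N₁ N₂ N hN₁ hN₂ hN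
end

section
/- Let Z be a finite ep-metric space, S > 0, and let k ≥ 1 be an integer. For t ≥ S, the natural map π₀R_t(k-N) → π₀V_t(k-N) is a bijection. Concretely: two points of Z are connected by a chain in which each consecutive pair {u,v} with u ≠ v satisfies d(u,v) ≤ t and is contained in some k-bounded neighbourhood of some point (the connectivity relation of V_t(k-N)) if and only if they are connected by a chain of rays {x,y} with y in some k-bounded neighbourhood of x and d(x,y) ≤ t (the connectivity relation of R_t(k-N)). -/
open scoped ENNReal

/-- `N` is a `k`-bounded neighbourhood of `x` (for the distance bound `S`):
`N ⊆ Z(x,S)` contains `x` and has at most `k + 1` elements. -/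
def IsKBdd {Z : Type*} [PseudoEMetricSpace Z] (S : ℝ≥0∞) (k : ℕ) (x : Z)
    (N : Set Z) : Prop :=
  x ∈ N ∧ N ⊆ {y | edist x y ≤ S} ∧ N.ncard ≤ k + 1

/-!
A simplex of `V_t(k-N)` lies in a `k`-bounded neighbourhood `N` of some centre `w`, and every
point of `N` is within `S ≤ t` of `w`. Since `k ≥ 1`, the pair `{w, x}` is itself a `k`-bounded
neighbourhood of `w` for each `x ∈ N`, so `w` is joined to every point of `N` by a ray; hence both
ends of an edge of `V_t(k-N)` are joined to `w` in `R_t(k-N)`. Conversely every ray is an edge.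
-/

open Relation

section

variable {Z : Type*} [PseudoEMetricSpace Z] {S t : ℝ≥0∞} {k : ℕ} {u v w x : Z}

/-- The ray `{x, y}` of `R_t(k-N)`, oriented from the centre `x`. -/
def IsRay (S : ℝ≥0∞) (k : ℕ) (t : ℝ≥0∞) (x y : Z) : Prop :=
  x ≠ y ∧ edist x y ≤ t ∧ ∃ N : Set Z, IsKBdd S k x N ∧ y ∈ N

/-- An edge of `V_t(k-N)`. -/
def IsKBddEdge (S : ℝ≥0∞) (k : ℕ) (t : ℝ≥0∞) (u v : Z) : Prop :=
  u ≠ v ∧ edist u v ≤ t ∧ ∃ (w : Z) (N : Set Z), IsKBdd S k w N ∧ u ∈ N ∧ v ∈ N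

lemma isKBdd_pair (hk : 1 ≤ k) (h : edist w x ≤ S) : IsKBdd S k w {w, x} := by
  refine ⟨Set.mem_insert w {x}, ?_, ?_⟩
  · rintro y (rfl | rfl)
    · simp
    · exact h
  · calc ({w, x} : Set Z).ncard ≤ ({x} : Set Z).ncard + 1 := Set.ncard_insert_le _ _
      _ ≤ k + 1 := by simpa using hk

lemma IsKBddEdge.symm (h : IsKBddEdge S k t u v) : IsKBddEdge S k t v u := by
  obtain ⟨hne, hle, w, N, hN, hu, hv⟩ := h
  exact ⟨hne.symm, by rwa [edist_comm], w, N, hN, hv, hu⟩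

lemma IsRay.isKBddEdge (h : IsRay S k t x u) : IsKBddEdge S k t x u := by
  obtain ⟨hne, hle, N, hN, hu⟩ := h
  exact ⟨hne, hle, x, N, hN, hN.1, hu⟩

lemma symmGen_isRay_le_isKBddEdge : SymmGen (IsRay S k t) ≤ IsKBddEdge (Z := Z) S k t :=
  fun _ _ h => Or.elim h IsRay.isKBddEdge fun h => (IsRay.isKBddEdge h).symm

lemma reflGen_isRay_of_edist_le (hk : 1 ≤ k) (ht : S ≤ t) (h : edist w x ≤ S) :
    ReflGen (IsRay S k t) w x := by
  rcases eq_or_ne w x with rfl | hne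
  · exact .refl
  · exact .single ⟨hne, h.trans ht, {w, x}, isKBdd_pair hk h, Set.mem_insert_of_mem w rfl⟩

lemma IsKBddEdge.reflTransGen_symmGen_isRay (hk : 1 ≤ k) (ht : S ≤ t)
    (h : IsKBddEdge S k t u v) : ReflTransGen (SymmGen (IsRay S k t)) u v := by
  obtain ⟨-, -, w, N, ⟨-, hNS, -⟩, hu, hv⟩ := h
  have joined_to_centre {x : Z} (hx : x ∈ N) : ReflTransGen (SymmGen (IsRay S k t)) w x :=
    ((reflGen_isRay_of_edist_le hk ht (hNS hx)).mono fun _ _ => SymmGen.of_rel).to_reflTransGen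
  exact (Std.Symm.symm _ _ (joined_to_centre hu)).trans (joined_to_centre hv)

end

theorem pi0_ray_eq_pi0_kBdd_general {Z : Type*} [PseudoEMetricSpace Z]
    (S : ℝ≥0∞) (k : ℕ) (hk : 1 ≤ k)
    (t : ℝ≥0∞) (ht : S ≤ t) :
    ∀ y z : Z,
      Relation.ReflTransGen (fun u v =>
          (u ≠ v ∧ edist u v ≤ t ∧ ∃ N : Set Z, IsKBdd S k u N ∧ v ∈ N) ∨
          (v ≠ u ∧ edist v u ≤ t ∧ ∃ N : Set Z, IsKBdd S k v N ∧ u ∈ N)) y z ↔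
        Relation.ReflTransGen (fun u v => u ≠ v ∧ edist u v ≤ t ∧
          ∃ (w : Z) (N : Set Z), IsKBdd S k w N ∧ u ∈ N ∧ v ∈ N) y z := by
  intro y z
  change ReflTransGen (SymmGen (IsRay S k t)) y z ↔ ReflTransGen (IsKBddEdge S k t) y z
  constructor
  · exact ReflTransGen.mono symmGen_isRay_le_isKBddEdge y z
  · exact reflTransGen_closed (fun _ _ h => h.reflTransGen_symmGen_isRay hk ht) y z

/-- Lemma 16: for `t ≥ S`, the map `π₀R_t(k-N) → π₀V_t(k-N)` is a bijection:
two points of `Z` are connected by a chain whose consecutive distinct pairs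
have distance `≤ t` and lie in a common `k`-bounded neighbourhood iff they are
connected by a chain of rays `{x,y}` with `y` in some `k`-bounded neighbourhood
of `x` and `d(x,y) ≤ t`. -/
theorem pi0_ray_eq_pi0_kBdd {Z : Type*} [Fintype Z] [PseudoEMetricSpace Z]
    (S : ℝ≥0∞) (hS : 0 < S) (k : ℕ) (hk : 1 ≤ k)
    (t : ℝ≥0∞) (ht : S ≤ t) :
    ∀ y z : Z,
      Relation.ReflTransGen (fun u v =>
          (u ≠ v ∧ edist u v ≤ t ∧ ∃ N : Set Z, IsKBdd S k u N ∧ v ∈ N) ∨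
          (v ≠ u ∧ edist v u ≤ t ∧ ∃ N : Set Z, IsKBdd S k v N ∧ u ∈ N)) y z ↔
        Relation.ReflTransGen (fun u v => u ≠ v ∧ edist u v ≤ t ∧
          ∃ (w : Z) (N : Set Z), IsKBdd S k w N ∧ u ∈ N ∧ v ∈ N) y z :=
  pi0_ray_eq_pi0_kBdd_general S k hk t ht
end

section
/- Let Z be a finite ep-metric space, S > 0, an integer k ≥ 2, and fix x ∈ Z. Let N(x) be the union of the Vietoris–Rips complexes V(N) over all k-bounded neighbourhoods N of x, and R(x) ⊆ N(x) the associated ray subcomplex. Then: (1) if t ≤ S, the map π₀N(x)_t → π₀V_t(Z(x,S)) is a bijection; concretely, any two points of Z(x,S) joined by a chain in Z(x,S) with consecutive distances ≤ t are joined by a chain whose consecutive pairs lie in common k-bounded neighbourhoods of x and have mutual distance ≤ t, and conversely. (2) If t ≥ S, then R(x)_t is connected (π₀R(x)_t is a single point) and the maps π₀R(x)_t → π₀N(x)_t → π₀V_t(Z(x,S)) are bijections; in particular the graph on Z(x,S) with edges given by pairs at distance ≤ t is connected. -/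
open scoped ENNReal

/-!
Every edge `{a, b}` of `V_t(Z(x,S))` lies in the neighbourhood `{x, a, b}`, which has at most
`3 ≤ k + 1` points; hence `N(x)_t` and `V_t(Z(x,S))` have the same edges and the same components
for every `t`. When `t ≥ S`, every point of `Z(x,S)` is joined to the centre `x` by a ray, so
`R(x)_t` is connected, and then so are the two larger graphs.
-/

namespace Relation

variable {α : Type*} {r s : α → α → Prop}

theorem ReflTransGen.mono_of_ne (h : ∀ a b, a ≠ b → r a b → s a b) {a b : α}
    (hab : ReflTransGen r a b) : ReflTransGen s a b := by
  rw [← reflTransGen_reflGen]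
  refine ReflTransGen.mono (fun a b hr => ?_) a b hab
  by_cases hne : a = b
  · exact hne ▸ ReflGen.refl
  · exact ReflGen.single (h a b hne hr)

theorem reflTransGen_of_forall_reflGen [Std.Symm r] {c : α} (hc : ∀ a, ReflGen r a c)
    (a b : α) : ReflTransGen r a b :=
  (hc a).to_reflTransGen.trans (Std.Symm.symm _ _ (hc b).to_reflTransGen)

end Relation

open Relation

section LocalNbhdComplex

variable {Z : Type*} [PseudoEMetricSpace Z] {S : ℝ≥0∞} {k : ℕ} {x : Z}

theorem isKBdd_triple (hk : 2 ≤ k) {a b : Z} (ha : edist x a ≤ S) (hb : edist x b ≤ S) :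
    IsKBdd S k x {x, a, b} := by
  refine ⟨Set.mem_insert x _, ?_, ?_⟩
  · rintro y (rfl | rfl | rfl)
    · simp
    · exact ha
    · exact hb
  · calc ({x, a, b} : Set Z).ncard ≤ ({a, b} : Set Z).ncard + 1 := Set.ncard_insert_le _ _
      _ ≤ ({b} : Set Z).ncard + 1 + 1 := by gcongr; exact Set.ncard_insert_le _ _
      _ ≤ k + 1 := by rw [Set.ncard_singleton]; omega

variable (S x)

def ballCentre : {y : Z // edist x y ≤ S} := ⟨x, by simp⟩

variable (k) (t : ℝ≥0∞)

/-- Adjacency in `V_t(Z(x,S))`. -/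
def ripsRel (a b : {y : Z // edist x y ≤ S}) : Prop :=
  edist (a : Z) b ≤ t

/-- Adjacency in `N(x)_t`. -/
def localNbhdRel (a b : {y : Z // edist x y ≤ S}) : Prop :=
  (a : Z) ≠ b ∧ edist (a : Z) b ≤ t ∧ ∃ N : Set Z, IsKBdd S k x N ∧ (a : Z) ∈ N ∧ (b : Z) ∈ N

/-- Adjacency in `R(x)_t`. -/
def rayRel (a b : {y : Z // edist x y ≤ S}) : Prop :=
  ((a : Z) = x ∧ (b : Z) ≠ x ∧ edist (a : Z) b ≤ t) ∨
    ((b : Z) = x ∧ (a : Z) ≠ x ∧ edist (a : Z) b ≤ t)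

variable {S x k t}

theorem localNbhdRel_of_ripsRel (hk : 2 ≤ k) {a b : {y : Z // edist x y ≤ S}} (hab : a ≠ b)
    (h : ripsRel S x t a b) : localNbhdRel S k x t a b :=
  ⟨Subtype.coe_injective.ne hab, h, _, isKBdd_triple hk a.2 b.2, by simp, by simp⟩

theorem reflTransGen_localNbhdRel_iff (hk : 2 ≤ k) (u v : {y : Z // edist x y ≤ S}) :
    ReflTransGen (localNbhdRel S k x t) u v ↔ ReflTransGen (ripsRel S x t) u v :=
  ⟨ReflTransGen.mono (fun _ _ hab => hab.2.1) u v,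
    ReflTransGen.mono_of_ne fun _ _ => localNbhdRel_of_ripsRel hk⟩

theorem rayRel.ripsRel {a b : {y : Z // edist x y ≤ S}} (h : rayRel S x t a b) :
    ripsRel S x t a b := by
  rcases h with ⟨-, -, h⟩ | ⟨-, -, h⟩ <;> exact h

instance : Std.Symm (rayRel S x t) where
  symm a b h := by
    rcases h with ⟨ha, hb, h⟩ | ⟨hb, ha, h⟩
    · exact Or.inr ⟨ha, hb, by rwa [edist_comm]⟩
    · exact Or.inl ⟨hb, ha, by rwa [edist_comm]⟩

theorem reflGen_rayRel_ballCentre (hSt : S ≤ t) (u : {y : Z // edist x y ≤ S}) :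
    ReflGen (rayRel S x t) u (ballCentre S x) := by
  by_cases hu : (u : Z) = x
  · exact (Subtype.ext hu : u = ballCentre S x) ▸ ReflGen.refl
  · exact ReflGen.single (Or.inr ⟨rfl, hu, by rw [edist_comm]; exact u.2.trans hSt⟩)

theorem reflTransGen_rayRel (hSt : S ≤ t) (u v : {y : Z // edist x y ≤ S}) :
    ReflTransGen (rayRel S x t) u v :=
  reflTransGen_of_forall_reflGen (reflGen_rayRel_ballCentre hSt) u v

end LocalNbhdComplex

theorem local_nbhd_complex_pi0_general {Z : Type*} [PseudoEMetricSpace Z]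
    (S : ℝ≥0∞) (k : ℕ) (hk : 2 ≤ k) (x : Z) (t : ℝ≥0∞) :
    (t ≤ S →
      ∀ u v : {y : Z // edist x y ≤ S},
        Relation.ReflTransGen (fun a b : {y : Z // edist x y ≤ S} =>
            (a : Z) ≠ b ∧ edist (a : Z) b ≤ t ∧
            ∃ N : Set Z, IsKBdd S k x N ∧ (a : Z) ∈ N ∧ (b : Z) ∈ N) u v ↔
          Relation.ReflTransGen (fun a b : {y : Z // edist x y ≤ S} =>
            edist (a : Z) b ≤ t) u v) ∧
    (S ≤ t →
      (∀ u v : {y : Z // edist x y ≤ S},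
        Relation.ReflTransGen (fun a b : {y : Z // edist x y ≤ S} =>
            ((a : Z) = x ∧ (b : Z) ≠ x ∧ edist (a : Z) b ≤ t) ∨
            ((b : Z) = x ∧ (a : Z) ≠ x ∧ edist (a : Z) b ≤ t)) u v) ∧
      (∀ u v : {y : Z // edist x y ≤ S},
        (Relation.ReflTransGen (fun a b : {y : Z // edist x y ≤ S} =>
            ((a : Z) = x ∧ (b : Z) ≠ x ∧ edist (a : Z) b ≤ t) ∨
            ((b : Z) = x ∧ (a : Z) ≠ x ∧ edist (a : Z) b ≤ t)) u v ↔
          Relation.ReflTransGen (fun a b : {y : Z // edist x y ≤ S} =>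
            (a : Z) ≠ b ∧ edist (a : Z) b ≤ t ∧
            ∃ N : Set Z, IsKBdd S k x N ∧ (a : Z) ∈ N ∧ (b : Z) ∈ N) u v) ∧
        (Relation.ReflTransGen (fun a b : {y : Z // edist x y ≤ S} =>
            (a : Z) ≠ b ∧ edist (a : Z) b ≤ t ∧
            ∃ N : Set Z, IsKBdd S k x N ∧ (a : Z) ∈ N ∧ (b : Z) ∈ N) u v ↔
          Relation.ReflTransGen (fun a b : {y : Z // edist x y ≤ S} =>
            edist (a : Z) b ≤ t) u v))) := by
  have hN := reflTransGen_localNbhdRel_iff (S := S) (x := x) (t := t) hk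
  refine ⟨fun _ => hN, fun hSt => ⟨reflTransGen_rayRel hSt, fun u v => ⟨?_, hN u v⟩⟩⟩
  exact ⟨fun h => (hN u v).2 (ReflTransGen.mono (fun _ _ => rayRel.ripsRel) u v h),
    fun _ => reflTransGen_rayRel hSt u v⟩

/-- Lemma 18: fix `x ∈ Z`, `S > 0` and `k ≥ 2`; work on the ball
`B = Z(x,S) = {y : d(x,y) ≤ S}`.  `N(x)_t` is the graph on `B` whose edges are
pairs `{y,z}`, `y ≠ z`, contained in some `k`-bounded neighbourhood of `x` with
`d(y,z) ≤ t`; `R(x)_t` is the ray graph on `B` whose edges are the pairs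
`{x,y}` with `y ∈ B \ {x}` and `d(x,y) ≤ t`; `V_t(Z(x,S))` is the graph on `B`
whose edges are pairs at distance `≤ t`.  Then:
(1) if `t ≤ S`, the map `π₀N(x)_t → π₀V_t(Z(x,S))` is a bijection;
(2) if `t ≥ S`, then `R(x)_t` is connected and the maps
`π₀R(x)_t → π₀N(x)_t → π₀V_t(Z(x,S))` are bijections. -/
theorem local_nbhd_complex_pi0 {Z : Type*} [Fintype Z] [PseudoEMetricSpace Z]
    (S : ℝ≥0∞) (hS : 0 < S) (k : ℕ) (hk : 2 ≤ k) (x : Z) (t : ℝ≥0∞) :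
    (t ≤ S →
      ∀ u v : {y : Z // edist x y ≤ S},
        Relation.ReflTransGen (fun a b : {y : Z // edist x y ≤ S} =>
            (a : Z) ≠ b ∧ edist (a : Z) b ≤ t ∧
            ∃ N : Set Z, IsKBdd S k x N ∧ (a : Z) ∈ N ∧ (b : Z) ∈ N) u v ↔
          Relation.ReflTransGen (fun a b : {y : Z // edist x y ≤ S} =>
            edist (a : Z) b ≤ t) u v) ∧
    (S ≤ t →
      (∀ u v : {y : Z // edist x y ≤ S},
        Relation.ReflTransGen (fun a b : {y : Z // edist x y ≤ S} =>
            ((a : Z) = x ∧ (b : Z) ≠ x ∧ edist (a : Z) b ≤ t) ∨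
            ((b : Z) = x ∧ (a : Z) ≠ x ∧ edist (a : Z) b ≤ t)) u v) ∧
      (∀ u v : {y : Z // edist x y ≤ S},
        (Relation.ReflTransGen (fun a b : {y : Z // edist x y ≤ S} =>
            ((a : Z) = x ∧ (b : Z) ≠ x ∧ edist (a : Z) b ≤ t) ∨
            ((b : Z) = x ∧ (a : Z) ≠ x ∧ edist (a : Z) b ≤ t)) u v ↔
          Relation.ReflTransGen (fun a b : {y : Z // edist x y ≤ S} =>
            (a : Z) ≠ b ∧ edist (a : Z) b ≤ t ∧
            ∃ N : Set Z, IsKBdd S k x N ∧ (a : Z) ∈ N ∧ (b : Z) ∈ N) u v) ∧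
        (Relation.ReflTransGen (fun a b : {y : Z // edist x y ≤ S} =>
            (a : Z) ≠ b ∧ edist (a : Z) b ≤ t ∧
            ∃ N : Set Z, IsKBdd S k x N ∧ (a : Z) ∈ N ∧ (b : Z) ∈ N) u v ↔
          Relation.ReflTransGen (fun a b : {y : Z // edist x y ≤ S} =>
            edist (a : Z) b ≤ t) u v))) :=
  local_nbhd_complex_pi0_general S k hk x t
end

section
/- Let Z be a finite ep-metric space in which each x ∈ Z has a fixed complete neighbourhood N_x = Z(x, r_x). Then: (1) if t ≤ r_x for all x ∈ Z, the natural maps π₀R_t(N) → π₀V_t(N) → π₀V_t(Z) are bijections; (2) if t ≥ r_x for all x ∈ Z, the natural map π₀R_t(N) → π₀V_t(N) is a bijection; (3) if t ≥ S ≥ r_x for all x ∈ Z, the natural map π₀R_S(N) → π₀R_t(N) is a bijection. Here the maps on path components are induced by inclusions of graphs on the common vertex set Z, and a bijection means the corresponding connectivity relations coincide. -/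
open scoped ENNReal

section

variable {Z : Type*} [PseudoEMetricSpace Z]

/-- Edge relation of `V_t(Z)`: pairs at distance `≤ t`. -/
def rvRel (t : ℝ≥0∞) (a b : Z) : Prop := edist a b ≤ t

/-- Edge relation of the neighbourhood complex `V_t(N)` for the system of
complete neighbourhoods `N_x = Z(x, r_x)`: pairs `{a,b}`, `a ≠ b`, with
`d(a,b) ≤ t` and `{a,b} ⊆ N_w` for some `w`. -/
def rnRel (r : Z → ℝ≥0∞) (t : ℝ≥0∞) (a b : Z) : Prop :=
  a ≠ b ∧ edist a b ≤ t ∧ ∃ w : Z, edist w a ≤ r w ∧ edist w b ≤ r w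

/-- Edge relation of the ray complex `R_t(N)`: pairs `{a,b}`, `a ≠ b`, with
`d(a,b) ≤ t`, such that `b ∈ N_a \ {a}` or `a ∈ N_b \ {b}`. -/
def rrRel (r : Z → ℝ≥0∞) (t : ℝ≥0∞) (a b : Z) : Prop :=
  a ≠ b ∧ edist a b ≤ t ∧ (edist a b ≤ r a ∨ edist b a ≤ r b)

end

open Relation

/-! Connectivity only depends on the edges up to paths, so each equivalence reduces to joining
the endpoints of every edge of one graph by a path in the other. If `t ≤ r`, every edge of
length `≤ t` is already a ray from either endpoint. If `r ≤ t`, an edge `{a, b} ⊆ N_w` is the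
path `a — w — b` of two rays. Rays have length `≤ r ≤ S`, so raising the bound from `S` to `t`
adds no edges. -/

theorem reflTransGen_iff_of_le_reflTransGen {α : Type*} {p q : α → α → Prop}
    (hpq : p ≤ ReflTransGen q) (hqp : q ≤ ReflTransGen p) (a b : α) :
    ReflTransGen p a b ↔ ReflTransGen q a b :=
  ⟨reflTransGen_closed hpq a b, reflTransGen_closed hqp a b⟩

section

variable {Z : Type*} [PseudoEMetricSpace Z] {r : Z → ℝ≥0∞} {t : ℝ≥0∞} {a b : Z}

theorem rnRel_of_rrRel (h : rrRel r t a b) : rnRel r t a b := by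
  obtain ⟨hab, hd, ha | hb⟩ := h
  · exact ⟨hab, hd, a, by simp, ha⟩
  · exact ⟨hab, hd, b, hb, by simp⟩

theorem rvRel_of_rnRel (h : rnRel r t a b) : rvRel t a b := h.2.1

theorem rrRel_of_rnRel (hr : ∀ x, t ≤ r x) (h : rnRel r t a b) : rrRel r t a b :=
  ⟨h.1, h.2.1, Or.inl (h.2.1.trans (hr a))⟩

theorem reflTransGen_rnRel_of_rvRel (hr : ∀ x, t ≤ r x) (h : rvRel t a b) :
    ReflTransGen (rnRel r t) a b := by
  by_cases hab : a = b
  · exact hab ▸ .refl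
  · exact .single ⟨hab, h, a, by simp, h.trans (hr a)⟩

instance : Std.Symm (rrRel r t) :=
  ⟨fun a b h => ⟨h.1.symm, edist_comm a b ▸ h.2.1, h.2.2.symm⟩⟩

theorem reflTransGen_rrRel_of_mem_ball (hr : ∀ x, r x ≤ t) {w : Z} (hw : edist w a ≤ r w) :
    ReflTransGen (rrRel r t) w a := by
  by_cases hwa : w = a
  · exact hwa ▸ .refl
  · exact .single ⟨hwa, hw.trans (hr w), Or.inl hw⟩

theorem reflTransGen_rrRel_of_rnRel (hr : ∀ x, r x ≤ t) (h : rnRel r t a b) :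
    ReflTransGen (rrRel r t) a b := by
  obtain ⟨-, -, w, hwa, hwb⟩ := h
  have haw : ReflTransGen (rrRel r t) a w := symm (reflTransGen_rrRel_of_mem_ball hr hwa)
  exact haw.trans (reflTransGen_rrRel_of_mem_ball hr hwb)

theorem rrRel_mono {S : ℝ≥0∞} (hSt : S ≤ t) (h : rrRel r S a b) : rrRel r t a b :=
  ⟨h.1, h.2.1.trans hSt, h.2.2⟩

theorem rrRel_of_le_bound {S : ℝ≥0∞} (hr : ∀ x, r x ≤ S) (h : rrRel r t a b) :
    rrRel r S a b := by
  obtain ⟨hab, -, ha | hb⟩ := h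
  · exact ⟨hab, ha.trans (hr a), Or.inl ha⟩
  · exact ⟨hab, (edist_comm a b ▸ hb).trans (hr b), Or.inr hb⟩

end

theorem complete_nbhd_pi0_general {Z : Type*} [PseudoEMetricSpace Z]
    (r : Z → ℝ≥0∞)
    (t : ℝ≥0∞) :
    ((∀ x : Z, t ≤ r x) → ∀ u v : Z,
      (Relation.ReflTransGen (rrRel r t) u v ↔
        Relation.ReflTransGen (rnRel r t) u v) ∧
      (Relation.ReflTransGen (rnRel r t) u v ↔
        Relation.ReflTransGen (rvRel t) u v)) ∧
    ((∀ x : Z, r x ≤ t) → ∀ u v : Z,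
      Relation.ReflTransGen (rrRel r t) u v ↔
        Relation.ReflTransGen (rnRel r t) u v) ∧
    (∀ S : ℝ≥0∞, (∀ x : Z, r x ≤ S) → S ≤ t → ∀ u v : Z,
      Relation.ReflTransGen (rrRel r S) u v ↔
        Relation.ReflTransGen (rrRel r t) u v) := by
  refine ⟨fun hr u v => ⟨?_, ?_⟩, fun hr u v => ?_, fun S hr hSt u v => ?_⟩
  · exact reflTransGen_iff_of_le_reflTransGen (fun _ _ h => .single (rnRel_of_rrRel h))
      (fun _ _ h => .single (rrRel_of_rnRel hr h)) u v
  · exact reflTransGen_iff_of_le_reflTransGen (fun _ _ h => .single (rvRel_of_rnRel h))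
      (fun _ _ h => reflTransGen_rnRel_of_rvRel hr h) u v
  · exact reflTransGen_iff_of_le_reflTransGen (fun _ _ h => .single (rnRel_of_rrRel h))
      (fun _ _ h => reflTransGen_rrRel_of_rnRel hr h) u v
  · exact reflTransGen_iff_of_le_reflTransGen (fun _ _ h => .single (rrRel_mono hSt h))
      (fun _ _ h => .single (rrRel_of_le_bound hr h)) u v

/-- Lemma 20: let `Z` be a finite ep-metric space with a fixed complete
neighbourhood `N_x = Z(x, r_x)` for each `x` (all distances within the balls
being finite).  Then:
(1) if `t ≤ r_x` for all `x`, the maps `π₀R_t(N) → π₀V_t(N) → π₀V_t(Z)` are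
bijections;
(2) if `t ≥ r_x` for all `x`, the map `π₀R_t(N) → π₀V_t(N)` is a bijection;
(3) if `t ≥ S ≥ r_x` for all `x`, the map `π₀R_S(N) → π₀R_t(N)` is a bijection.
Bijections of path components mean equality of connectivity relations. -/
theorem complete_nbhd_pi0 {Z : Type*} [Fintype Z] [PseudoEMetricSpace Z]
    (r : Z → ℝ≥0∞) (hfin : ∀ x y : Z, edist x y ≤ r x → edist x y < ⊤)
    (t : ℝ≥0∞) (ht : t ≠ ⊤) :
    ((∀ x : Z, t ≤ r x) → ∀ u v : Z,
      (Relation.ReflTransGen (rrRel r t) u v ↔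
        Relation.ReflTransGen (rnRel r t) u v) ∧
      (Relation.ReflTransGen (rnRel r t) u v ↔
        Relation.ReflTransGen (rvRel t) u v)) ∧
    ((∀ x : Z, r x ≤ t) → ∀ u v : Z,
      Relation.ReflTransGen (rrRel r t) u v ↔
        Relation.ReflTransGen (rnRel r t) u v) ∧
    (∀ S : ℝ≥0∞, (∀ x : Z, r x ≤ S) → S ≤ t → ∀ u v : Z,
      Relation.ReflTransGen (rrRel r S) u v ↔
        Relation.ReflTransGen (rrRel r t) u v) :=
  complete_nbhd_pi0_general r t
end

section
/- Let Z be a finite set in which each x ∈ Z has a weighted neighbourhood N_x (with x ∈ N_x and weights d_x(y) ∈ (0,∞) for y ∈ N_x \ {x}). Define the cost c(u,v) ∈ [0,∞] by c(u,u) = 0 and, for u ≠ v, c(u,v) = the minimum of d_u(v) (if v ∈ N_u) and d_v(u) (if u ∈ N_v), with c(u,v) = ∞ if {u,v} is not a ray of any neighbourhood; and let D(z,w) = inf over finite sequences z = z₀, …, z_p = w of Σ_j c(z_j,z_{j+1}) (the amalgamated UMAP ep-metric). Then for every s ∈ [0,∞), two points z, w ∈ Z are joined by a chain with consecutive D-distances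 ≤ s if and only if they are joined by a chain of rays each of cost c ≤ s; that is, the map π₀R_s(N) → π₀V_s(Z,D) induced by the inclusion of the ray complex into the Vietoris–Rips complex of (Z,D) is a bijection for all s ≥ 0. -/
/-!
Every `D`-distance is at most the corresponding cost, which gives one inclusion. For the other,
`Z` is finite, so the costs take finitely many values and for finite `s` there is a gap `m > s`
with no cost in `(s, m)`. If `D(z, w) ≤ s < m`, some chain from `z` to `w` has total cost `< m`;
then each of its steps costs `< m`, hence `≤ s`, and the chain is a chain of rays of cost `≤ s`.
-/

open scoped ENNReal

/-- The infimum of the total cost `Σⱼ c(zⱼ, zⱼ₊₁)` over all finite sequences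
`z = z₀, z₁, …, z_p = w` in `Z`. -/
noncomputable def chainInf {Z : Type*} (c : Z → Z → ℝ≥0∞) (z w : Z) : ℝ≥0∞ :=
  ⨅ (n : ℕ) (f : Fin (n + 1) → Z) (_ : f 0 = z) (_ : f (Fin.last n) = w),
    ∑ i : Fin n, c (f i.castSucc) (f i.succ)

open Classical in
/-- The cost of the pair `{u,v}` for the system of weighted neighbourhoods
`N : Z → Set Z` with weights `d`: `c(u,u) = 0`, and for `u ≠ v`, `c(u,v)` is
the minimum of `d_u(v)` (if `v ∈ N_u`) and `d_v(u)` (if `u ∈ N_v`), being `∞`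
if `{u,v}` is a ray of neither neighbourhood. -/
noncomputable def umapCost {Z : Type*} (N : Z → Set Z) (d : Z → Z → ℝ≥0∞)
    (u v : Z) : ℝ≥0∞ :=
  if u = v then 0
  else min (if v ∈ N u then d u v else ⊤) (if u ∈ N v then d v u else ⊤)

open Relation

theorem Relation.reflTransGen_of_fin_chain {α : Type*} {r : α → α → Prop} :
    ∀ {n : ℕ} (f : Fin (n + 1) → α), (∀ i : Fin n, r (f i.castSucc) (f i.succ)) →
      ReflTransGen r (f 0) (f (Fin.last n))
  | 0, _, _ => .refl
  | _ + 1, f, h =>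
    (reflTransGen_of_fin_chain (f ∘ Fin.castSucc) fun i => h i.castSucc).tail (h (Fin.last _))

theorem Relation.reflTransGen_ne_and {α : Type*} (r : α → α → Prop) :
    ReflTransGen (fun a b => a ≠ b ∧ r a b) = ReflTransGen r := by
  refine le_antisymm (ReflTransGen.mono fun _ _ h => h.2) (reflTransGen_closed fun a b h => ?_)
  by_cases hab : a = b
  · exact hab ▸ .refl
  · exact .single ⟨hab, h⟩

theorem Finite.exists_gt_forall_lt_imp_le {ι α : Type*} [Finite ι] [LinearOrder α]
    [OrderTop α] (f : ι → α) {s : α} (hs : s < ⊤) : ∃ m, s < m ∧ ∀ i, f i < m → f i ≤ s := by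
  classical
  have := Fintype.ofFinite ι
  refine ⟨(Finset.univ.filter fun i => s < f i).inf f, ?_, fun i hi => ?_⟩
  · exact (Finset.lt_inf_iff hs).2 fun i hi => (Finset.mem_filter.1 hi).2
  · by_contra! hsi
    exact hi.not_ge (Finset.inf_le (Finset.mem_filter.2 ⟨Finset.mem_univ i, hsi⟩))

section chainInf

variable {Z : Type*} (c : Z → Z → ℝ≥0∞)

theorem chainInf_le_apply (u v : Z) : chainInf c u v ≤ c u v :=
  iInf_le_of_le 1 <| iInf_le_of_le ![u, v] <| iInf_le_of_le rfl <| iInf_le_of_le rfl <| by simp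

theorem exists_fin_chain_sum_lt_of_chainInf_lt {z w : Z} {t : ℝ≥0∞} (h : chainInf c z w < t) :
    ∃ (n : ℕ) (f : Fin (n + 1) → Z), f 0 = z ∧ f (Fin.last n) = w ∧
      ∑ i : Fin n, c (f i.castSucc) (f i.succ) < t := by
  simpa only [chainInf, iInf_lt_iff, exists_prop] using h

theorem reflTransGen_of_chainInf_le [Finite Z] {s : ℝ≥0∞} {z w : Z} (h : chainInf c z w ≤ s) :
    ReflTransGen (fun u v => c u v ≤ s) z w := by
  rcases eq_or_ne s ⊤ with rfl | hs
  · exact .single le_top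
  obtain ⟨m, hsm, hgap⟩ :=
    Finite.exists_gt_forall_lt_imp_le (fun p : Z × Z => c p.1 p.2) hs.lt_top
  obtain ⟨n, f, rfl, rfl, hsum⟩ := exists_fin_chain_sum_lt_of_chainInf_lt c (h.trans_lt hsm)
  refine reflTransGen_of_fin_chain f fun i => hgap (f i.castSucc, f i.succ) ?_
  exact (Finset.single_le_sum_of_canonicallyOrdered (Finset.mem_univ i)).trans_lt hsum

end chainInf

theorem pi0_ray_eq_pi0_umap_general {Z : Type*} [Fintype Z]
    (N : Z → Set Z)
    (d : Z → Z → ℝ≥0∞)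
    (s : ℝ≥0∞) :
    ∀ z w : Z,
      Relation.ReflTransGen (fun u v => u ≠ v ∧ umapCost N d u v ≤ s) z w ↔
        Relation.ReflTransGen
          (fun u v => chainInf (umapCost N d) u v ≤ s) z w := by
  intro z w
  rw [reflTransGen_ne_and]
  constructor
  · exact ReflTransGen.mono (fun u v h => (chainInf_le_apply _ u v).trans h) z w
  · exact reflTransGen_closed (fun u v => reflTransGen_of_chainInf_le _) z w

/-- Theorem 27: let `Z` be a finite set with a weighted neighbourhood `N_x`
for each `x` (weights `d_x(y) ∈ (0,∞)` for `y ∈ N_x \ {x}`), and let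
`D = chainInf (umapCost N d)` be the amalgamated UMAP ep-metric.  Then for
every `s ∈ [0,∞)`, two points are joined by a chain of rays each of cost `≤ s`
iff they are joined by a chain with consecutive `D`-distances `≤ s`; that is,
the map `π₀R_s(N) → π₀V_s(Z,D)` is a bijection for all `s ≥ 0`. -/
theorem pi0_ray_eq_pi0_umap {Z : Type*} [Fintype Z]
    (N : Z → Set Z) (hmem : ∀ z, z ∈ N z)
    (d : Z → Z → ℝ≥0∞)
    (hd : ∀ x, ∀ y ∈ N x, y ≠ x → 0 < d x y ∧ d x y < ⊤)
    (s : ℝ≥0∞) (hs : s ≠ ⊤) :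
    ∀ z w : Z,
      Relation.ReflTransGen (fun u v => u ≠ v ∧ umapCost N d u v ≤ s) z w ↔
        Relation.ReflTransGen
          (fun u v => chainInf (umapCost N d) u v ≤ s) z w :=
  pi0_ray_eq_pi0_umap_general N d s
end
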